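/- Let H be a connected k-uniform hypergraph with maximum degree Δ, let u be a vertex of H with degree d_H(u) < ξ for some integer ξ ≥ max{Δ,2}. Then for every real x ≥ (k/(k−1))·((k−1)(ξ−1))^{1/k}, the ratio μ(H,x)/μ(H−u,x) is strictly greater than ((k−1)(ξ−1))^{1/k}. -/

import Mathlib

open scoped Classical

structure FinHypergraph (α : Type*) [DecidableEq α] where
  verts : Finset α
  edges : Finset (Finset α)
  edge_sub : ∀ e ∈ edges, e ⊆ verts

namespace FinHypergraph

variable {α : Type*} [DecidableEq α] {β : Type*} [DecidableEq β]

/-- `H` is `k`-uniform: every edge has exactly `k` vertices. -/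
def IsUniform (H : FinHypergraph α) (k : ℕ) : Prop := ∀ e ∈ H.edges, e.card = k

/-- The degree of a vertex: the number of edges containing it. -/
def degree (H : FinHypergraph α) (v : α) : ℕ := (H.edges.filter (fun e => v ∈ e)).card

/-- `Δ` is the maximum degree of `H`. -/
def maxDegree (H : FinHypergraph α) (Δ : ℕ) : Prop :=
  (∀ v, H.degree v ≤ Δ) ∧ ∃ v ∈ H.verts, H.degree v = Δ

/-- Two vertices are adjacent if some edge contains both. -/
def Adj (H : FinHypergraph α) (a b : α) : Prop := ∃ e ∈ H.edges, a ∈ e ∧ b ∈ e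

/-- `H` is connected: nonempty and any two vertices joined by a walk. -/
def Connected (H : FinHypergraph α) : Prop :=
  H.verts.Nonempty ∧ ∀ a ∈ H.verts, ∀ b ∈ H.verts, Relation.ReflTransGen H.Adj a b

/-- A matching: a set of pairwise disjoint edges of `H`. -/
def IsMatching (H : FinHypergraph α) (M : Finset (Finset α)) : Prop :=
  M ⊆ H.edges ∧ ∀ e ∈ M, ∀ f ∈ M, e ≠ f → Disjoint e f

/-- `p(H, r)`: the number of matchings of size `r`. -/
noncomputable def matchCount (H : FinHypergraph α) (r : ℕ) : ℕ :=
  (H.edges.powerset.filter (fun M => M.card = r ∧ H.IsMatching M)).card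

/-- The matching polynomial `μ(H,x) = Σ_r (-1)^r p(H,r) x^{|V| - k r}`. -/
noncomputable def matchingPoly (H : FinHypergraph α) (k : ℕ) : Polynomial ℝ :=
  ∑ r ∈ Finset.range (H.edges.card + 1),
    Polynomial.C ((-1 : ℝ) ^ r * (H.matchCount r : ℝ)) * Polynomial.X ^ (H.verts.card - k * r)

/-- Deleting a set of vertices: induced sub-hypergraph on `verts \ W`. -/
def delete (H : FinHypergraph α) (W : Finset α) : FinHypergraph α where
  verts := H.verts \ W
  edges := H.edges.filter (fun e => Disjoint e W)
  edge_sub := by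
    intro e he
    simp only [Finset.mem_filter] at he
    exact Finset.subset_sdiff.mpr ⟨H.edge_sub e he.1, he.2⟩

/-- The set of moduli of the complex zeros of a real polynomial. -/
def rootModuli (p : Polynomial ℝ) : Set ℝ :=
  {m | ∃ z : ℂ, (Polynomial.aeval z) p = 0 ∧ ‖z‖ = m}

/-- `λ(H)`: the maximum modulus of the complex zeros of the matching polynomial. -/
noncomputable def lam (H : FinHypergraph α) (k : ℕ) : ℝ :=
  sSup (rootModuli (H.matchingPoly k))

end FinHypergraph

/-! Put `t = ((k-1)(ξ-1))^{1/k}`. By induction on the number of vertices, every `k`-graph `G`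
of maximum degree at most `ξ` satisfies `μ(G,x) > 0` and `μ(G,x) > t·μ(G-v,x)` for each
vertex `v` of degree `< ξ`. The step expands `μ(G) = x·μ(G-v) - Σ_{e ∋ v} μ(G-e)`. Deleting the
other `k-1` vertices of `e` one at a time, each has degree `< ξ` in the current graph (an edge
through it is already gone), so the induction hypothesis gives `t^{k-1}·μ(G-e) < μ(G-v)`. Hence
`t^{k-1}·μ(G) > (x·t^{k-1} - d(v))·μ(G-v)`, and the bound on `x` is exactly what makes
`x·t^{k-1} ≥ t^k + ξ - 1`. -/

open Finset Polynomial

lemma add_pow_le_mul_pow_pred {k : ℕ} {a t x : ℝ} (hk : 2 ≤ k) (ht : 0 ≤ t)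
    (htk : t ^ k = (k - 1) * a) (hx : k / (k - 1) * t ≤ x) : a + t ^ k ≤ x * t ^ (k - 1) := by
  have hk1 : (k : ℝ) - 1 ≠ 0 := by
    have : (2 : ℝ) ≤ k := by exact_mod_cast hk
    linarith
  calc a + t ^ k = k / (k - 1) * (t * t ^ (k - 1)) := by
        rw [← pow_succ', Nat.sub_add_cancel (by omega), htk]; field_simp; ring
    _ ≤ x * t ^ (k - 1) := by
        rw [← mul_assoc]; exact mul_le_mul_of_nonneg_right hx (pow_nonneg ht _)

namespace FinHypergraph

variable {α : Type*} [DecidableEq α] {G : FinHypergraph α} {k : ℕ}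

@[ext]
lemma ext {G G' : FinHypergraph α} (hV : G.verts = G'.verts) (hE : G.edges = G'.edges) :
    G = G' := by
  cases G; cases G'; simp_all

lemma IsUniform.delete (hG : G.IsUniform k) (W : Finset α) : (G.delete W).IsUniform k :=
  fun e he => hG e (mem_filter.mp he).1

lemma card_verts_delete {W : Finset α} (hW : W ⊆ G.verts) :
    #(G.delete W).verts = #G.verts - #W :=
  card_sdiff_of_subset hW

lemma delete_delete (W W' : Finset α) : (G.delete W).delete W' = G.delete (W ∪ W') := by
  ext <;> simp [delete, disjoint_union_right, and_assoc]

lemma degree_delete_le (W : Finset α) (v : α) : (G.delete W).degree v ≤ G.degree v :=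
  card_le_card fun e he => by
    simp only [delete, mem_filter] at he ⊢
    exact ⟨he.1.1, he.2⟩

lemma degree_delete_lt {W : Finset α} {v : α} {e : Finset α} (he : e ∈ G.edges) (hve : v ∈ e)
    (heW : ¬Disjoint e W) : (G.delete W).degree v < G.degree v := by
  refine card_lt_card ⟨fun f hf => ?_, fun hsub => heW ?_⟩
  · simp only [delete, mem_filter] at hf ⊢
    exact ⟨hf.1.1, hf.2⟩
  · have := hsub (mem_filter.mpr ⟨he, hve⟩)
    simp only [delete, mem_filter] at this
    exact this.1.2

lemma edges_eq_empty_of_verts_eq_empty (hG : G.IsUniform k) (hk : k ≠ 0) (hV : G.verts = ∅) :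
    G.edges = ∅ :=
  eq_empty_of_forall_notMem fun e he => hk <| by
    have he' : e ⊆ ∅ := hV ▸ G.edge_sub e he
    rw [← hG e he, subset_empty.mp he', card_empty]

noncomputable def matchings (G : FinHypergraph α) : Finset (Finset (Finset α)) :=
  {M ∈ G.edges.powerset | G.IsMatching M}

lemma mem_matchings {M : Finset (Finset α)} : M ∈ G.matchings ↔ G.IsMatching M := by
  simp only [matchings, mem_filter, mem_powerset, and_iff_right_iff_imp]
  exact fun h => h.1

lemma IsMatching.mul_card_le (hG : G.IsUniform k) {M : Finset (Finset α)} (hM : G.IsMatching M) :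
    k * #M ≤ #G.verts :=
  calc k * #M = ∑ e ∈ M, #e := by
        rw [sum_congr rfl fun e he => hG e (hM.1 he), sum_const, smul_eq_mul, mul_comm]
    _ = #(M.biUnion id) := (card_biUnion fun e he f hf hef => hM.2 e he f hf hef).symm
    _ ≤ #G.verts := card_le_card fun a ha => by
        obtain ⟨e, he, hae⟩ := mem_biUnion.mp ha
        exact G.edge_sub e (hM.1 he) hae

lemma matchingPoly_eq_sum_matchings (G : FinHypergraph α) (k : ℕ) :
    G.matchingPoly k = ∑ M ∈ G.matchings, (-1) ^ #M * X ^ (#G.verts - k * #M) := by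
  rw [matchingPoly, ← sum_fiberwise_of_maps_to (g := card) (t := range (#G.edges + 1))
    fun M hM => mem_range_succ_iff.mpr (card_le_card (mem_matchings.mp hM).1)]
  refine sum_congr rfl fun r _ => ?_
  have hcount : #{M ∈ G.matchings | #M = r} = G.matchCount r := by
    simp only [matchings, filter_filter, matchCount, and_comm]
  rw [sum_congr rfl fun M hM => by rw [(mem_filter.mp hM).2], sum_const, hcount, nsmul_eq_mul]
  simp only [C_mul, C_pow, C_neg, C_1, map_natCast]
  ring

lemma filter_matchings_forall_notMem (v : α) :
    {M ∈ G.matchings | ∀ e ∈ M, v ∉ e} = (G.delete {v}).matchings := by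
  ext M
  simp only [mem_filter, mem_matchings, IsMatching, delete, subset_iff, disjoint_singleton_right]
  grind

lemma filter_matchings_mem {e : Finset α} (he : e ∈ G.edges) :
    {M ∈ G.matchings | e ∈ M} = (G.delete e).matchings.image (insert e) := by
  ext M
  simp only [mem_filter, mem_image, mem_matchings, IsMatching, delete, subset_iff]
  constructor
  · rintro ⟨⟨hME, hMd⟩, heM⟩
    refine ⟨M.erase e, ⟨fun f hf => ?_, fun f hf g hg => hMd f (mem_of_mem_erase hf) g
      (mem_of_mem_erase hg)⟩, insert_erase heM⟩
    exact ⟨hME (mem_of_mem_erase hf), hMd f (mem_of_mem_erase hf) e heM (ne_of_mem_erase hf)⟩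
  · rintro ⟨M', ⟨hM'E, hM'd⟩, rfl⟩
    refine ⟨⟨fun f hf => ?_, fun f hf g hg hfg => ?_⟩, mem_insert_self e M'⟩
    · rcases mem_insert.mp hf with rfl | hf
      exacts [he, (hM'E hf).1]
    · rw [mem_insert] at hf hg
      rcases hf with rfl | hf <;> rcases hg with rfl | hg
      exacts [absurd rfl hfg, ((hM'E hg).2).symm, (hM'E hf).2, hM'd f hf g hg hfg]

lemma sum_filter_matchings_mem (hG : G.IsUniform k) (hk : k ≠ 0) {e : Finset α}
    (he : e ∈ G.edges) :
    ∑ M ∈ G.matchings with e ∈ M, (-1 : ℝ[X]) ^ #M * X ^ (#G.verts - k * #M) =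
      -(G.delete e).matchingPoly k := by
  have heM : ∀ M ∈ (G.delete e).matchings, e ∉ M := fun M hM heM => by
    have hee := (mem_filter.mp ((mem_matchings.mp hM).1 heM)).2
    rw [disjoint_self_iff_empty] at hee
    exact hk (by rw [← hG e he, hee, card_empty])
  rw [filter_matchings_mem he, sum_image fun M hM M' hM' h => by
      rw [← erase_insert (heM M hM), h, erase_insert (heM M' hM')],
    matchingPoly_eq_sum_matchings, ← sum_neg_distrib,
    card_verts_delete (G.edge_sub e he), hG e he]
  refine sum_congr rfl fun M hM => ?_
  rw [card_insert_of_notMem (heM M hM), mul_add_one, pow_succ, Nat.sub_add_eq, Nat.sub_right_comm]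
  ring

theorem matchingPoly_eq_X_mul_sub_sum (hG : G.IsUniform k) (hk : k ≠ 0) {v : α}
    (hv : v ∈ G.verts) :
    G.matchingPoly k = X * (G.delete {v}).matchingPoly k -
      ∑ e ∈ G.edges with v ∈ e, (G.delete e).matchingPoly k := by
  have hcover : {M ∈ G.matchings | ¬∀ e ∈ M, v ∉ e} =
      {e ∈ G.edges | v ∈ e}.biUnion fun e => {M ∈ G.matchings | e ∈ M} := by
    ext M
    simp only [mem_filter, mem_biUnion, not_forall, not_not, exists_prop]
    exact ⟨fun ⟨hM, e, heM, hve⟩ => ⟨e, ⟨(mem_matchings.mp hM).1 heM, hve⟩, hM, heM⟩,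
      fun ⟨e, ⟨_, hve⟩, hM, heM⟩ => ⟨hM, e, heM, hve⟩⟩
  have hdisj : (({e ∈ G.edges | v ∈ e} : Finset (Finset α)) : Set (Finset α)).PairwiseDisjoint
      fun e => {M ∈ G.matchings | e ∈ M} := by
    intro e he f hf hef
    refine disjoint_left.mpr fun M hMe hMf => ?_
    simp only [coe_filter, Set.mem_ofPred_eq, mem_filter] at he hf hMe hMf
    exact disjoint_left.mp ((mem_matchings.mp hMe.1).2 e hMe.2 f hMf.2 hef) he.2 hf.2
  have havoid : ∑ M ∈ (G.delete {v}).matchings, (-1 : ℝ[X]) ^ #M * X ^ (#G.verts - k * #M) =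
      X * (G.delete {v}).matchingPoly k := by
    rw [matchingPoly_eq_sum_matchings, mul_sum]
    refine sum_congr rfl fun M hM => ?_
    have hM := (mem_matchings.mp hM).mul_card_le (hG.delete {v})
    rw [card_verts_delete (singleton_subset_iff.mpr hv), card_singleton] at hM
    have hV : 0 < #G.verts := card_pos.mpr ⟨v, hv⟩
    rw [show #G.verts - k * #M = #G.verts - 1 - k * #M + 1 by omega, pow_succ,
      card_verts_delete (singleton_subset_iff.mpr hv), card_singleton]
    ring
  rw [matchingPoly_eq_sum_matchings,
    ← sum_filter_add_sum_filter_not _ fun M => ∀ e ∈ M, v ∉ e,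
    filter_matchings_forall_notMem, havoid, hcover, sum_biUnion hdisj,
    sum_congr rfl fun e he => sum_filter_matchings_mem hG hk (mem_filter.mp he).1,
    sum_neg_distrib, sub_eq_add_neg]

lemma matchingPoly_eq_one_of_verts_eq_empty (hG : G.IsUniform k) (hk : k ≠ 0)
    (hV : G.verts = ∅) : G.matchingPoly k = 1 := by
  have hM : G.matchings = {∅} := by
    rw [matchings, edges_eq_empty_of_verts_eq_empty hG hk hV, powerset_empty, filter_singleton,
      if_pos ⟨empty_subset _, by simp⟩]
  simp [matchingPoly_eq_sum_matchings, hM, hV]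

def RatioExceeds (G : FinHypergraph α) (k ξ : ℕ) (t x : ℝ) : Prop :=
  0 < (G.matchingPoly k).eval x ∧ ∀ v ∈ G.verts, G.degree v < ξ →
    t * ((G.delete {v}).matchingPoly k).eval x < (G.matchingPoly k).eval x

section RatioExceeds

variable {ξ : ℕ} {t x : ℝ}

lemma mul_eval_delete_insert_lt
    (hsub : ∀ S ⊆ G.verts, S.Nonempty → (G.delete S).RatioExceeds k ξ t x)
    (hdeg : ∀ w, G.degree w ≤ ξ) {e S : Finset α} (he : e ∈ G.edges) (hSe : S ⊆ e)
    (hS : S.Nonempty) {w : α} (hw : w ∈ e \ S) :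
    t * ((G.delete (insert w S)).matchingPoly k).eval x < ((G.delete S).matchingPoly k).eval x := by
  obtain ⟨hwe, hwS⟩ := mem_sdiff.mp hw
  obtain ⟨s, hs⟩ := hS
  have := (hsub S (hSe.trans (G.edge_sub e he)) ⟨s, hs⟩).2 w
    (mem_sdiff.mpr ⟨G.edge_sub e he hwe, hwS⟩)
    ((degree_delete_lt he hwe (not_disjoint_iff.mpr ⟨s, hSe hs, hs⟩)).trans_le (hdeg w))
  rwa [delete_delete, union_comm, ← insert_eq] at this

lemma eval_delete_mul_pow_le
    (hsub : ∀ S ⊆ G.verts, S.Nonempty → (G.delete S).RatioExceeds k ξ t x)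
    (hdeg : ∀ w, G.degree w ≤ ξ) (ht : 0 ≤ t) {e : Finset α} (he : e ∈ G.edges) :
    ∀ n, ∀ S ⊆ e, S.Nonempty → #(e \ S) = n →
      ((G.delete e).matchingPoly k).eval x * t ^ n ≤ ((G.delete S).matchingPoly k).eval x := by
  intro n
  induction n with
  | zero =>
    intro S hSe _ hn
    rw [subset_antisymm hSe (sdiff_eq_empty_iff_subset.mp (card_eq_zero.mp hn)), pow_zero, mul_one]
  | succ n ih =>
    intro S hSe hS hn
    obtain ⟨w, hw⟩ := card_pos.mp (hn ▸ n.succ_pos : 0 < #(e \ S))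
    have hwS : insert w S ⊆ e := insert_subset (mem_sdiff.mp hw).1 hSe
    have hn' : #(e \ insert w S) = n := by
      rw [sdiff_insert, card_erase_of_mem hw, hn, Nat.add_sub_cancel]
    calc ((G.delete e).matchingPoly k).eval x * t ^ (n + 1)
        = t * (((G.delete e).matchingPoly k).eval x * t ^ n) := by ring
      _ ≤ t * ((G.delete (insert w S)).matchingPoly k).eval x :=
        mul_le_mul_of_nonneg_left (ih _ hwS (insert_nonempty w S) hn') ht
      _ ≤ ((G.delete S).matchingPoly k).eval x :=
        (mul_eval_delete_insert_lt hsub hdeg he hSe hS hw).le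

lemma eval_delete_edge_mul_pow_lt (hG : G.IsUniform k) (hk : 2 ≤ k)
    (hsub : ∀ S ⊆ G.verts, S.Nonempty → (G.delete S).RatioExceeds k ξ t x)
    (hdeg : ∀ w, G.degree w ≤ ξ) (ht : 0 ≤ t) {e : Finset α} (he : e ∈ G.edges) {v : α}
    (hve : v ∈ e) :
    ((G.delete e).matchingPoly k).eval x * t ^ (k - 1) <
      ((G.delete {v}).matchingPoly k).eval x := by
  obtain ⟨w, hwe, hwv⟩ := exists_mem_ne (by rw [hG e he]; omega) v
  have hw : w ∈ e \ {v} := mem_sdiff.mpr ⟨hwe, notMem_singleton.mpr hwv⟩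
  have hcard : #(e \ insert w {v}) = k - 2 := by
    rw [sdiff_insert, card_erase_of_mem hw, sdiff_singleton_eq_erase, card_erase_of_mem hve,
      hG e he]
    omega
  calc ((G.delete e).matchingPoly k).eval x * t ^ (k - 1)
      = t * (((G.delete e).matchingPoly k).eval x * t ^ (k - 2)) := by
        rw [show k - 1 = k - 2 + 1 by omega, pow_succ]; ring
    _ ≤ t * ((G.delete (insert w {v})).matchingPoly k).eval x :=
        mul_le_mul_of_nonneg_left (eval_delete_mul_pow_le hsub hdeg ht he _ _
          (insert_subset hwe (singleton_subset_iff.mpr hve)) (insert_nonempty _ _) hcard) ht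
    _ < ((G.delete {v}).matchingPoly k).eval x :=
        mul_eval_delete_insert_lt hsub hdeg he (singleton_subset_iff.mpr hve)
          (singleton_nonempty v) hw

lemma eval_pos_and_mul_eval_delete_lt (hG : G.IsUniform k) (hk : 2 ≤ k) (hξ : 2 ≤ ξ)
    (ht : 0 < t) (ht1 : 1 ≤ t ^ k) (hx : (ξ : ℝ) - 1 + t ^ k ≤ x * t ^ (k - 1))
    (hsub : ∀ S ⊆ G.verts, S.Nonempty → (G.delete S).RatioExceeds k ξ t x)
    (hdeg : ∀ w, G.degree w ≤ ξ) {v : α} (hv : v ∈ G.verts) :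
    0 < (G.matchingPoly k).eval x ∧
      (G.degree v < ξ →
        t * ((G.delete {v}).matchingPoly k).eval x < (G.matchingPoly k).eval x) := by
  set P := ((G.delete {v}).matchingPoly k).eval x
  have hP : 0 < P := (hsub {v} (singleton_subset_iff.mpr hv) (singleton_nonempty v)).1
  have hrec := congrArg (eval x) (matchingPoly_eq_X_mul_sub_sum hG (by omega) hv)
  simp only [eval_sub, eval_mul, eval_X, eval_finsetSum] at hrec
  have hs : 0 < t ^ (k - 1) := pow_pos ht _
  have htt : t * t ^ (k - 1) = t ^ k := by rw [← pow_succ', Nat.sub_add_cancel (by omega)]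
  have hξ' : (2 : ℝ) ≤ ξ := by exact_mod_cast hξ
  have hdξ : (G.degree v : ℝ) ≤ ξ := by exact_mod_cast hdeg v
  rcases Nat.eq_zero_or_pos (G.degree v) with hd | hd
  · rw [show {e ∈ G.edges | v ∈ e} = ∅ from card_eq_zero.mp hd, sum_empty, sub_zero] at hrec
    have htx : t < x := lt_of_mul_lt_mul_right (by linarith) hs.le
    exact ⟨hrec ▸ mul_pos (ht.trans htx) hP, fun _ => hrec ▸ mul_lt_mul_of_pos_right htx hP⟩
  · have hsum :
        ∑ e ∈ G.edges with v ∈ e, ((G.delete e).matchingPoly k).eval x * t ^ (k - 1) <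
          G.degree v * P := by
      calc _ < ∑ e ∈ G.edges with v ∈ e, P := sum_lt_sum_of_nonempty (card_pos.mp hd)
              fun e he => eval_delete_edge_mul_pow_lt hG hk hsub hdeg ht.le
                (mem_filter.mp he).1 (mem_filter.mp he).2
        _ = G.degree v * P := by rw [sum_const, nsmul_eq_mul]; rfl
    have hkey : (x * t ^ (k - 1) - G.degree v) * P < t ^ (k - 1) * (G.matchingPoly k).eval x := by
      have : t ^ (k - 1) * (G.matchingPoly k).eval x = x * t ^ (k - 1) * P -
          ∑ e ∈ G.edges with v ∈ e, ((G.delete e).matchingPoly k).eval x * t ^ (k - 1) := by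
        rw [hrec, ← sum_mul]; ring
      linarith
    refine ⟨pos_of_mul_pos_right ((mul_nonneg (by linarith) hP.le).trans_lt hkey) hs.le,
      fun hdlt => lt_of_mul_lt_mul_left ?_ hs.le⟩
    have hdlt' : (G.degree v : ℝ) + 1 ≤ ξ := by exact_mod_cast hdlt
    calc t ^ (k - 1) * (t * P) = t ^ k * P := by rw [← htt]; ring
      _ ≤ (x * t ^ (k - 1) - G.degree v) * P := mul_le_mul_of_nonneg_right (by linarith) hP.le
      _ < _ := hkey

theorem ratioExceeds_of_degree_le (hG : G.IsUniform k) (hk : 2 ≤ k) (hξ : 2 ≤ ξ)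
    (ht : 0 < t) (ht1 : 1 ≤ t ^ k) (hx : (ξ : ℝ) - 1 + t ^ k ≤ x * t ^ (k - 1))
    (hdeg : ∀ w, G.degree w ≤ ξ) : G.RatioExceeds k ξ t x := by
  induction hn : #G.verts using Nat.strong_induction_on generalizing G with
  | _ n ih =>
  have hsub (S : Finset α) (hS : S ⊆ G.verts) (hSne : S.Nonempty) :
      (G.delete S).RatioExceeds k ξ t x := by
    refine ih _ ?_ (hG.delete S) (fun w => (degree_delete_le S w).trans (hdeg w)) rfl
    rw [← hn, card_verts_delete hS]
    exact Nat.sub_lt (hSne.mono hS).card_pos hSne.card_pos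
  rcases G.verts.eq_empty_or_nonempty with hV | ⟨v, hv⟩
  · exact ⟨by simp [matchingPoly_eq_one_of_verts_eq_empty hG (by omega) hV], by simp [hV]⟩
  · exact ⟨(eval_pos_and_mul_eval_delete_lt hG hk hξ ht ht1 hx hsub hdeg hv).1,
      fun w hw => (eval_pos_and_mul_eval_delete_lt hG hk hξ ht ht1 hx hsub hdeg hw).2⟩

end RatioExceeds

end FinHypergraph

theorem matchingPoly_ratio_gt_general {α : Type*} [DecidableEq α]
    (H : FinHypergraph α) (k Δ ξ : ℕ) (hk : 2 ≤ k) (hH : H.IsUniform k)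
    (hΔ : H.maxDegree Δ)
    (hξ : max Δ 2 ≤ ξ) (u : α) (hu : u ∈ H.verts) (hdeg : H.degree u < ξ) :
    ∀ x : ℝ, (k : ℝ) / ((k : ℝ) - 1) *
        (((k : ℝ) - 1) * ((ξ : ℝ) - 1)) ^ ((1 : ℝ) / (k : ℝ)) ≤ x →
      (((k : ℝ) - 1) * ((ξ : ℝ) - 1)) ^ ((1 : ℝ) / (k : ℝ)) <
        (H.matchingPoly k).eval x / ((H.delete {u}).matchingPoly k).eval x := by
  intro x hx
  have hξ2 : 2 ≤ ξ := (le_max_right _ _).trans hξ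
  have hbase : 1 ≤ ((k : ℝ) - 1) * ((ξ : ℝ) - 1) := by
    have hk' : (2 : ℝ) ≤ k := by exact_mod_cast hk
    have hξ' : (2 : ℝ) ≤ ξ := by exact_mod_cast hξ2
    nlinarith
  have htk : ((((k : ℝ) - 1) * ((ξ : ℝ) - 1)) ^ ((1 : ℝ) / (k : ℝ))) ^ k =
      ((k : ℝ) - 1) * ((ξ : ℝ) - 1) := by
    rw [one_div]; exact Real.rpow_inv_natCast_pow (by linarith) (by omega)
  set t := (((k : ℝ) - 1) * ((ξ : ℝ) - 1)) ^ ((1 : ℝ) / (k : ℝ))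
  have ht : 0 < t := Real.rpow_pos_of_pos (by linarith) _
  have hx' := add_pow_le_mul_pow_pred hk ht.le htk hx
  have hdegH (w : α) : H.degree w ≤ ξ := (hΔ.1 w).trans ((le_max_left _ _).trans hξ)
  have hR := fun {G : FinHypergraph α} (hG : G.IsUniform k) (hdegG : ∀ w, G.degree w ≤ ξ) =>
    FinHypergraph.ratioExceeds_of_degree_le hG hk hξ2 ht (htk ▸ hbase) hx' hdegG
  rw [lt_div_iff₀ (hR (hH.delete {u})
    fun w => (FinHypergraph.degree_delete_le {u} w).trans (hdegH w)).1]
  exact (hR hH hdegH).2 u hu hdeg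

/-- For a connected `k`-graph `H` with maximum degree `Δ`, a vertex `u` of degree
`< ξ` where `ξ ≥ max{Δ,2}`, and all real `x ≥ (k/(k−1))·((k−1)(ξ−1))^{1/k}`, the ratio
`μ(H,x)/μ(H−u,x)` strictly exceeds `((k−1)(ξ−1))^{1/k}`. -/
theorem matchingPoly_ratio_gt {α : Type*} [DecidableEq α]
    (H : FinHypergraph α) (k Δ ξ : ℕ) (hk : 2 ≤ k) (hH : H.IsUniform k)
    (hconn : H.Connected) (hΔ : H.maxDegree Δ)
    (hξ : max Δ 2 ≤ ξ) (u : α) (hu : u ∈ H.verts) (hdeg : H.degree u < ξ) :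
    ∀ x : ℝ, (k : ℝ) / ((k : ℝ) - 1) *
        (((k : ℝ) - 1) * ((ξ : ℝ) - 1)) ^ ((1 : ℝ) / (k : ℝ)) ≤ x →
      (((k : ℝ) - 1) * ((ξ : ℝ) - 1)) ^ ((1 : ℝ) / (k : ℝ)) <
        (H.matchingPoly k).eval x / ((H.delete {u}).matchingPoly k).eval x :=
  matchingPoly_ratio_gt_general H k Δ ξ hk hH hΔ hξ u hu hdeg
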